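/- arXiv:2511.11499 — 5 statements merged into one kernel-verified Lean document; each statement's English description precedes it below -/
import Mathlib

section
/- Let n, q ≥ 1, let D be an n×n diagonal matrix with nonnegative entries, and let E = D ⊗ I_q ∈ ℝ^{nq×nq}. Let M be a real symmetric nq×nq matrix, indexed by pairs (i,α) ∈ [n]×[q], with spectral norm ‖M‖ ≤ 1 and M_{(i,α),(i,β)} = 0 for all i ∈ [n] and α, β ∈ [q]. Let ε > 0 and let Π be the orthogonal projection onto the span of the eigenvectors of M with eigenvalue at least ε. Let m ∈ ℝ^{nq} and let S be a real symmetric nq×nq matrix satisfying: S − mmᵀ is positive semidefinite; 0 ≤ S_{(i,α),(i,α)} ≤ m_{(i,α)} for all i, α; and Σ_{α∈[q]} m_{(i,α)} = 1 for every i ∈ [n]. Then for every v ∈ ℝ^{nq}: ⟨E^{1/2} M E^{1/2}, S⟩ − mᵀ E^{1/2} M E^{1/2} m ≤ ε·Tr(D) + 4·(Tr(Π E^{1/2} S E^{1/2} Π) − 2·vᵀ Π E^{1/2} m + ‖v‖²). -/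
open Matrix Finset
open scoped Matrix.Norms.L2Operator

/-- The orthogonal projection onto the span of the eigenvectors of the real symmetric
matrix `M` with eigenvalue at least `ε`, written as a matrix: the sum of the outer
products `u uᵀ` over an orthonormal eigenbasis, restricted to eigenvalues `≥ ε`. -/
noncomputable def eigProj {ι : Type*} [Fintype ι] [DecidableEq ι]
    {M : Matrix ι ι ℝ} (hM : M.IsHermitian) (ε : ℝ) : Matrix ι ι ℝ :=
  ∑ i ∈ Finset.univ.filter (fun i => ε ≤ hM.eigenvalues i),
    vecMulVec (fun a => hM.eigenvectorBasis i a) (fun a => hM.eigenvectorBasis i a)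

/-- `E = D ⊗ I_q`: the diagonal `nq × nq` matrix with `E_{(i,α),(i,α)} = D_{ii}`. -/
noncomputable def kronDiag {n q : ℕ} (D : Matrix (Fin n) (Fin n) ℝ) :
    Matrix (Fin n × Fin q) (Fin n × Fin q) ℝ :=
  Matrix.diagonal fun p => D p.1 p.1

/-- `E^{1/2} = D^{1/2} ⊗ I_q`: the diagonal `nq × nq` matrix with entries `√(D_{ii})`. -/
noncomputable def kronSqrtDiag {n q : ℕ} (D : Matrix (Fin n) (Fin n) ℝ) :
    Matrix (Fin n × Fin q) (Fin n × Fin q) ℝ :=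
  Matrix.diagonal fun p => Real.sqrt (D p.1 p.1)

section auxl
set_option linter.unusedSectionVars false
variable {ι : Type*} [Fintype ι] [DecidableEq ι]

lemma vecMulVec_mulVec' (a b x : ι → ℝ) : vecMulVec a b *ᵥ x = (b ⬝ᵥ x) • a := by
  ext i
  simp only [mulVec, vecMulVec_apply, dotProduct, Pi.smul_apply, smul_eq_mul]
  simp only [dotProduct, mul_assoc, ← Finset.mul_sum]
  ring

lemma trace_vecMulVec_mul (a b : ι → ℝ) (C : Matrix ι ι ℝ) :
    Matrix.trace (vecMulVec a b * C) = b ⬝ᵥ (C *ᵥ a) := by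
  simp only [Matrix.trace, Matrix.diag, Matrix.mul_apply, vecMulVec_apply, dotProduct, mulVec]
  rw [Finset.sum_comm]
  apply Finset.sum_congr rfl
  intro r _
  rw [Finset.mul_sum]
  apply Finset.sum_congr rfl
  intro p _
  ring

lemma trace_vecMulVec_mul_mul_vecMulVec (a b c d : ι → ℝ) (A : Matrix ι ι ℝ) :
    Matrix.trace (vecMulVec a b * A * vecMulVec c d) = (b ⬝ᵥ (A *ᵥ c)) * (d ⬝ᵥ a) := by
  rw [Matrix.trace_mul_comm, trace_vecMulVec_mul]
  rw [← Matrix.mulVec_mulVec, vecMulVec_mulVec', dotProduct_smul, smul_eq_mul]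

lemma eigbasis_dot {M : Matrix ι ι ℝ} (hM : M.IsHermitian) (k l : ι) :
    (fun a => hM.eigenvectorBasis k a : ι → ℝ) ⬝ᵥ (fun a => hM.eigenvectorBasis l a)
      = if k = l then 1 else 0 := by
  have h := orthonormal_iff_ite.mp hM.eigenvectorBasis.orthonormal k l
  simpa [PiLp.inner_apply, dotProduct, mul_comm] using h

lemma spectral_sum {M : Matrix ι ι ℝ} (hM : M.IsHermitian) :
    M = ∑ k, hM.eigenvalues k •
      vecMulVec (fun a => hM.eigenvectorBasis k a) (fun a => hM.eigenvectorBasis k a) := by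
  conv_lhs => rw [hM.spectral_theorem, Unitary.conjStarAlgAut_apply]
  ext a b
  simp only [Matrix.mul_apply, Matrix.diagonal_apply, Function.comp_apply, Matrix.sum_apply,
    Matrix.smul_apply, vecMulVec_apply, smul_eq_mul, Matrix.star_apply,
    Matrix.IsHermitian.eigenvectorUnitary_apply, star_trivial,
    RCLike.ofReal_real_eq_id, id_eq, mul_ite, mul_zero, ite_mul, zero_mul]
  simp only [Finset.sum_ite_eq, Finset.sum_ite_eq', Finset.mem_univ, if_true]
  apply Finset.sum_congr rfl
  intro k _
  ring

lemma sum_vecMulVec_eigenbasis {M : Matrix ι ι ℝ} (hM : M.IsHermitian) :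
    (∑ k, vecMulVec (fun a => hM.eigenvectorBasis k a) (fun a => hM.eigenvectorBasis k a))
      = (1 : Matrix ι ι ℝ) := by
  have h := (Matrix.mem_unitaryGroup_iff).mp (hM.eigenvectorUnitary).2
  calc (∑ k, vecMulVec (fun a => hM.eigenvectorBasis k a) (fun a => hM.eigenvectorBasis k a))
      = (hM.eigenvectorUnitary : Matrix ι ι ℝ) * star (hM.eigenvectorUnitary : Matrix ι ι ℝ) := by
        ext a b
        simp [Matrix.mul_apply, Matrix.sum_apply, vecMulVec_apply, Matrix.star_apply,
          Matrix.conjTranspose_apply]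
    _ = 1 := h

lemma eig_le_one {M : Matrix ι ι ℝ} (hM : M.IsHermitian) (hMnorm : ‖M‖ ≤ 1) (k : ι) :
    hM.eigenvalues k ≤ 1 := by
  have h1 : ‖hM.eigenvectorBasis k‖ = 1 := hM.eigenvectorBasis.orthonormal.1 k
  have h2 := Matrix.l2_opNorm_mulVec M (hM.eigenvectorBasis k)
  have h5 : (EuclideanSpace.equiv ι ℝ).symm (M *ᵥ (hM.eigenvectorBasis k))
      = (hM.eigenvalues k • hM.eigenvectorBasis k : EuclideanSpace ℝ ι) := by
    apply PiLp.ext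
    intro i
    exact congrFun (hM.mulVec_eigenvectorBasis k) i
  rw [h5, norm_smul, h1, mul_one, mul_one, Real.norm_eq_abs] at h2
  calc hM.eigenvalues k ≤ |hM.eigenvalues k| := le_abs_self _
    _ ≤ ‖M‖ := h2
    _ ≤ 1 := hMnorm


lemma dotProduct_sum'' {κ : Type*} (s : Finset κ) (f : κ → ι → ℝ) (x : ι → ℝ) :
    x ⬝ᵥ (∑ k ∈ s, f k) = ∑ k ∈ s, x ⬝ᵥ f k := by
  simp only [dotProduct, Finset.sum_apply, Finset.mul_sum]
  rw [Finset.sum_comm]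

lemma sum_dotProduct'' {κ : Type*} (s : Finset κ) (f : κ → ι → ℝ) (x : ι → ℝ) :
    (∑ k ∈ s, f k) ⬝ᵥ x = ∑ k ∈ s, f k ⬝ᵥ x := by
  simp only [dotProduct, Finset.sum_apply, Finset.sum_mul]
  rw [Finset.sum_comm]

lemma trace_eigProj_mul_mul {M : Matrix ι ι ℝ} (hM : M.IsHermitian) (ε : ℝ) (C : Matrix ι ι ℝ) :
    Matrix.trace (eigProj hM ε * C * eigProj hM ε)
      = ∑ k ∈ Finset.univ.filter (fun k => ε ≤ hM.eigenvalues k),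
          (fun a => hM.eigenvectorBasis k a : ι → ℝ) ⬝ᵥ (C *ᵥ (fun a => hM.eigenvectorBasis k a)) := by
  rw [eigProj]
  simp only [Matrix.sum_mul, Matrix.mul_sum, Matrix.trace_sum]
  apply Finset.sum_congr rfl
  intro k hk
  have : ∀ l ∈ Finset.univ.filter (fun l => ε ≤ hM.eigenvalues l),
      Matrix.trace (vecMulVec (fun a => hM.eigenvectorBasis l a) (fun a => hM.eigenvectorBasis l a) * C
        * vecMulVec (fun a => hM.eigenvectorBasis k a) (fun a => hM.eigenvectorBasis k a))
      = if l = k then (fun a => hM.eigenvectorBasis k a : ι → ℝ) ⬝ᵥ (C *ᵥ (fun a => hM.eigenvectorBasis k a)) else 0 := by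
    intro l _
    rw [trace_vecMulVec_mul_mul_vecMulVec, eigbasis_dot]
    split <;> rename_i h
    · subst h; simp
    · simp [if_neg (Ne.symm h)]
  rw [Finset.sum_congr rfl this, Finset.sum_ite_eq' _ k, if_pos hk]

lemma eigProj_mulVec {M : Matrix ι ι ℝ} (hM : M.IsHermitian) (ε : ℝ) (g : ι → ℝ) :
    eigProj hM ε *ᵥ g = ∑ k ∈ Finset.univ.filter (fun k => ε ≤ hM.eigenvalues k),
      ((fun a => hM.eigenvectorBasis k a : ι → ℝ) ⬝ᵥ g) • (fun a => hM.eigenvectorBasis k a : ι → ℝ) := by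
  rw [eigProj]
  ext i
  simp only [mulVec, Matrix.sum_apply, dotProduct, Finset.sum_apply, Finset.sum_mul,
    Pi.smul_apply, smul_eq_mul]
  rw [Finset.sum_comm]
  apply Finset.sum_congr rfl
  intro k _
  have := congrFun (vecMulVec_mulVec' (fun a => hM.eigenvectorBasis k a)
    (fun a => hM.eigenvectorBasis k a) g) i
  simpa [mulVec, dotProduct, Pi.smul_apply, Finset.sum_mul] using this

lemma eigProj_mulVec_dot {M : Matrix ι ι ℝ} (hM : M.IsHermitian) (ε : ℝ) (g : ι → ℝ) :
    (eigProj hM ε *ᵥ g) ⬝ᵥ (eigProj hM ε *ᵥ g)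
      = ∑ k ∈ Finset.univ.filter (fun k => ε ≤ hM.eigenvalues k),
          ((fun a => hM.eigenvectorBasis k a : ι → ℝ) ⬝ᵥ g)^2 := by
  rw [eigProj_mulVec, sum_dotProduct'']
  apply Finset.sum_congr rfl
  intro k hk
  rw [dotProduct_sum'']
  have : ∀ l ∈ Finset.univ.filter (fun l => ε ≤ hM.eigenvalues l),
      (((fun a => hM.eigenvectorBasis k a : ι → ℝ) ⬝ᵥ g) • (fun a => hM.eigenvectorBasis k a : ι → ℝ)) ⬝ᵥ
        (((fun a => hM.eigenvectorBasis l a : ι → ℝ) ⬝ᵥ g) • (fun a => hM.eigenvectorBasis l a : ι → ℝ))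
      = if l = k then ((fun a => hM.eigenvectorBasis k a : ι → ℝ) ⬝ᵥ g)^2 else 0 := by
    intro l _
    rw [smul_dotProduct, dotProduct_smul, eigbasis_dot]
    split <;> rename_i h
    · subst h; simp [sq, smul_eq_mul, mul_comm, mul_left_comm]
    · simp [if_neg (Ne.symm h)]
  rw [Finset.sum_congr rfl this, Finset.sum_ite_eq' _ k, if_pos hk]


end auxl

theorem stmt4 {n q : ℕ} (hn : 1 ≤ n) (hq : 1 ≤ q)
    (D : Matrix (Fin n) (Fin n) ℝ)
    (hDdiag : ∀ i j, i ≠ j → D i j = 0) (hDpos : ∀ i, 0 ≤ D i i)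
    (M : Matrix (Fin n × Fin q) (Fin n × Fin q) ℝ) (hM : M.IsHermitian)
    (hMnorm : ‖M‖ ≤ 1)
    (hMdiag : ∀ (i : Fin n) (α β : Fin q), M (i, α) (i, β) = 0)
    (ε : ℝ) (hε : 0 < ε)
    (m : Fin n × Fin q → ℝ)
    (S : Matrix (Fin n × Fin q) (Fin n × Fin q) ℝ) (hS : S.IsHermitian)
    (hPSD : (S - vecMulVec m m).PosSemidef)
    (hSdiag : ∀ p, 0 ≤ S p p ∧ S p p ≤ m p)
    (hmsum : ∀ i : Fin n, ∑ α, m (i, α) = 1)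
    (v : Fin n × Fin q → ℝ) :
    Matrix.trace ((kronSqrtDiag (q := q) D * M * kronSqrtDiag (q := q) D)ᵀ * S)
        - m ⬝ᵥ ((kronSqrtDiag (q := q) D * M * kronSqrtDiag (q := q) D) *ᵥ m) ≤
      ε * Matrix.trace D
        + 4 * (Matrix.trace (eigProj hM ε * kronSqrtDiag (q := q) D * S
                  * kronSqrtDiag (q := q) D * eigProj hM ε)
              - 2 * (v ⬝ᵥ ((eigProj hM ε * kronSqrtDiag (q := q) D) *ᵥ m))
              + v ⬝ᵥ v) := by
  classical
  set F := kronSqrtDiag (q := q) D with hFdef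
  set w := (eigProj hM ε * F) *ᵥ m with hwdef
  set Z := S - vecMulVec m m with hZdef
  set A := F * Z * F with hAdef
  set u : (Fin n × Fin q) → (Fin n × Fin q) → ℝ :=
    fun k => (fun a => hM.eigenvectorBasis k a) with hu
  set filt := Finset.univ.filter (fun k : Fin n × Fin q => ε ≤ hM.eigenvalues k) with hfilt
  have hFsymm : Fᵀ = F := Matrix.diagonal_transpose _
  have hMsymm : Mᵀ = M := by
    ext i j
    rw [Matrix.transpose_apply, ← hM.apply i j, star_trivial]
  -- nonnegativity of the quadratic forms c k
  have hvecMulF : ∀ x : Fin n × Fin q → ℝ, x ᵥ* F = F *ᵥ x := by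
    intro x
    nth_rewrite 1 [← hFsymm]
    rw [Matrix.vecMul_transpose]
  have hcnonneg : ∀ k, 0 ≤ u k ⬝ᵥ (A *ᵥ u k) := by
    intro k
    rw [hAdef, ← Matrix.mulVec_mulVec, ← Matrix.mulVec_mulVec, Matrix.dotProduct_mulVec,
      hvecMulF]
    simpa using hPSD.dotProduct_mulVec_nonneg (F *ᵥ u k)
  -- LHS equals trace (M * A)
  have e1 : (F * M * F)ᵀ = F * M * F := by
    rw [Matrix.transpose_mul, Matrix.transpose_mul, hFsymm, hMsymm, Matrix.mul_assoc]
  have e2 : m ⬝ᵥ ((F * M * F) *ᵥ m) = Matrix.trace ((F * M * F) * vecMulVec m m) := by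
    rw [Matrix.trace_mul_comm, trace_vecMulVec_mul]
  have hLHS : Matrix.trace ((F * M * F)ᵀ * S) - m ⬝ᵥ ((F * M * F) *ᵥ m)
      = Matrix.trace (M * A) := by
    rw [e1, e2, ← Matrix.trace_sub, ← Matrix.mul_sub, ← hZdef]
    have a1 : F * M * F * Z = F * (M * (F * Z)) := by simp only [Matrix.mul_assoc]
    have a2 : M * (F * Z) * F = M * A := by rw [hAdef]; simp only [Matrix.mul_assoc]
    rw [a1, Matrix.trace_mul_comm, a2]
  -- trace (M * A) as weighted sum over eigenvalues
  have hMA : Matrix.trace (M * A) = ∑ k, hM.eigenvalues k * (u k ⬝ᵥ (A *ᵥ u k)) := by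
    conv_lhs => rw [spectral_sum hM]
    rw [Matrix.sum_mul, Matrix.trace_sum]
    apply Finset.sum_congr rfl
    intro k _
    rw [Matrix.smul_mul, Matrix.trace_smul, trace_vecMulVec_mul, smul_eq_mul]
  -- total sum of quadratic forms equals trace A
  have hsumc : ∑ k, u k ⬝ᵥ (A *ᵥ u k) = Matrix.trace A := by
    have h1 : ∀ k : Fin n × Fin q, u k ⬝ᵥ (A *ᵥ u k)
        = Matrix.trace (vecMulVec (u k) (u k) * A) :=
      fun k => (trace_vecMulVec_mul _ _ _).symm
    rw [Finset.sum_congr rfl (fun k _ => h1 k), ← Matrix.trace_sum, ← Matrix.sum_mul,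
      show (∑ k, vecMulVec (u k) (u k)) = 1 from sum_vecMulVec_eigenbasis hM, Matrix.one_mul]
  -- trace A ≤ trace D
  have hApp : ∀ p : Fin n × Fin q, A p p = D p.1 p.1 * (S p p - m p * m p) := by
    intro p
    have hs : Real.sqrt (D p.1 p.1) * Real.sqrt (D p.1 p.1) = D p.1 p.1 :=
      Real.mul_self_sqrt (hDpos p.1)
    simp only [hAdef, hZdef, hFdef, kronSqrtDiag, Matrix.mul_diagonal,
      Matrix.diagonal_mul, Matrix.sub_apply, vecMulVec_apply]
    linear_combination (S p p - m p * m p) * hs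
  have htraceA : Matrix.trace A ≤ Matrix.trace D := by
    have h1 : Matrix.trace A = ∑ i : Fin n, ∑ α : Fin q,
        D i i * (S (i,α) (i,α) - m (i,α) * m (i,α)) := by
      rw [Matrix.trace, Fintype.sum_prod_type]
      exact Finset.sum_congr rfl fun i _ => Finset.sum_congr rfl fun α _ => hApp (i, α)
    rw [h1, Matrix.trace]
    apply Finset.sum_le_sum
    intro i _
    have hb : ∑ α, (S (i,α) (i,α) - m (i,α) * m (i,α)) ≤ 1 := by
      rw [← hmsum i]
      apply Finset.sum_le_sum
      intro α _
      have h := hSdiag (i, α)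
      nlinarith [mul_self_nonneg (m (i, α))]
    calc ∑ α, D i i * (S (i,α) (i,α) - m (i,α) * m (i,α))
        = D i i * ∑ α, (S (i,α) (i,α) - m (i,α) * m (i,α)) := by rw [Finset.mul_sum]
      _ ≤ D i i * 1 := mul_le_mul_of_nonneg_left hb (hDpos i)
      _ = Matrix.diag D i := mul_one _
  -- projection trace
  have hT : Matrix.trace (eigProj hM ε * F * S * F * eigProj hM ε)
      = ∑ k ∈ filt, u k ⬝ᵥ ((F * S * F) *ᵥ u k) := by
    rw [show eigProj hM ε * F * S * F * eigProj hM ε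
        = eigProj hM ε * (F * S * F) * eigProj hM ε by simp only [Matrix.mul_assoc]]
    exact trace_eigProj_mul_mul hM ε (F * S * F)
  -- splitting the quadratic form
  have hFmm : F * vecMulVec m m * F = vecMulVec (F *ᵥ m) (F *ᵥ m) := by
    ext p r
    simp only [hFdef, kronSqrtDiag, Matrix.mul_diagonal, Matrix.diagonal_mul,
      vecMulVec_apply, Matrix.mulVec_diagonal]
    ring
  have hAsplit : A = F * S * F - vecMulVec (F *ᵥ m) (F *ᵥ m) := by
    rw [hAdef, hZdef, Matrix.mul_sub, Matrix.sub_mul, hFmm]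
  have hsplit : ∀ k, u k ⬝ᵥ (A *ᵥ u k)
      = u k ⬝ᵥ ((F * S * F) *ᵥ u k) - (u k ⬝ᵥ (F *ᵥ m))^2 := by
    intro k
    rw [hAsplit, Matrix.sub_mulVec, dotProduct_sub, vecMulVec_mulVec', dotProduct_smul,
      smul_eq_mul, dotProduct_comm (F *ᵥ m) (u k), sq]
  have hww : w ⬝ᵥ w = ∑ k ∈ filt, (u k ⬝ᵥ (F *ᵥ m))^2 := by
    rw [hwdef, ← Matrix.mulVec_mulVec]
    exact eigProj_mulVec_dot hM ε (F *ᵥ m)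
  have hhigh : ∑ k ∈ filt, u k ⬝ᵥ (A *ᵥ u k)
      = Matrix.trace (eigProj hM ε * F * S * F * eigProj hM ε) - w ⬝ᵥ w := by
    rw [hT, hww, ← Finset.sum_sub_distrib]
    exact Finset.sum_congr rfl fun k _ => hsplit k
  have hhigh_nonneg : 0 ≤ ∑ k ∈ filt, u k ⬝ᵥ (A *ᵥ u k) :=
    Finset.sum_nonneg fun k _ => hcnonneg k
  -- splitting the eigenvalue sum
  have hsum_split : ∑ k, hM.eigenvalues k * (u k ⬝ᵥ (A *ᵥ u k))
      = ∑ k ∈ filt, hM.eigenvalues k * (u k ⬝ᵥ (A *ᵥ u k))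
        + ∑ k ∈ Finset.univ.filter (fun k => ¬ ε ≤ hM.eigenvalues k),
            hM.eigenvalues k * (u k ⬝ᵥ (A *ᵥ u k)) :=
    (Finset.sum_filter_add_sum_filter_not Finset.univ _ _).symm
  have hA1 : ∑ k ∈ filt, hM.eigenvalues k * (u k ⬝ᵥ (A *ᵥ u k))
      ≤ ∑ k ∈ filt, u k ⬝ᵥ (A *ᵥ u k) := by
    apply Finset.sum_le_sum
    intro k _
    have h1 := hcnonneg k
    have h2 := eig_le_one hM hMnorm k
    nlinarith
  have hA2 : ∑ k ∈ Finset.univ.filter (fun k => ¬ ε ≤ hM.eigenvalues k),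
      hM.eigenvalues k * (u k ⬝ᵥ (A *ᵥ u k)) ≤ ε * Matrix.trace D := by
    calc ∑ k ∈ Finset.univ.filter (fun k => ¬ ε ≤ hM.eigenvalues k),
          hM.eigenvalues k * (u k ⬝ᵥ (A *ᵥ u k))
        ≤ ∑ k ∈ Finset.univ.filter (fun k => ¬ ε ≤ hM.eigenvalues k),
            ε * (u k ⬝ᵥ (A *ᵥ u k)) := by
          apply Finset.sum_le_sum
          intro k hk
          have h1 : hM.eigenvalues k < ε := lt_of_not_ge (Finset.mem_filter.mp hk).2
          have h2 := hcnonneg k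
          nlinarith
      _ = ε * ∑ k ∈ Finset.univ.filter (fun k => ¬ ε ≤ hM.eigenvalues k),
            u k ⬝ᵥ (A *ᵥ u k) := by rw [Finset.mul_sum]
      _ ≤ ε * ∑ k, u k ⬝ᵥ (A *ᵥ u k) := by
          apply mul_le_mul_of_nonneg_left _ hε.le
          exact Finset.sum_le_sum_of_subset_of_nonneg (Finset.filter_subset _ _)
            (fun k _ _ => hcnonneg k)
      _ = ε * Matrix.trace A := by rw [hsumc]
      _ ≤ ε * Matrix.trace D := mul_le_mul_of_nonneg_left htraceA hε.le
  -- quadratic nonnegativity in v, w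
  have hvv : 0 ≤ (w - v) ⬝ᵥ (w - v) :=
    Finset.sum_nonneg fun i _ => mul_self_nonneg _
  have hvexp : (w - v) ⬝ᵥ (w - v) = w ⬝ᵥ w - 2*(v ⬝ᵥ w) + v ⬝ᵥ v := by
    rw [dotProduct_sub, sub_dotProduct, sub_dotProduct, dotProduct_comm w v]
    ring
  rw [hLHS, hMA, hsum_split]
  linarith [hA1, hA2, hhigh, hhigh_nonneg, hvv, hvexp]
end

section
/- Let M be a d×d real symmetric matrix with spectral norm ‖M‖ ≤ 1, let ε > 0, and let Π be the orthogonal projection onto the span of the eigenvectors of M with eigenvalue at least ε. Then for every d×d real positive semidefinite matrix W: ⟨M, W⟩ ≤ ε·Tr(W) + Tr(Π W Π). -/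
open Matrix Finset
open scoped Matrix.Norms.L2Operator

theorem stmt5 {d : ℕ} (M : Matrix (Fin d) (Fin d) ℝ) (hM : M.IsHermitian)
    (hMnorm : ‖M‖ ≤ 1) (ε : ℝ) (hε : 0 < ε)
    (W : Matrix (Fin d) (Fin d) ℝ) (hW : W.PosSemidef) :
    Matrix.trace (Mᵀ * W) ≤
      ε * Matrix.trace W + Matrix.trace (eigProj hM ε * W * eigProj hM ε) := by
  classical
  set U : Matrix (Fin d) (Fin d) ℝ := (hM.eigenvectorUnitary : Matrix (Fin d) (Fin d) ℝ) with hU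
  set lam : Fin d → ℝ := hM.eigenvalues with hlam
  have hUstar : U * star U = 1 := Matrix.mem_unitaryGroup_iff.mp hM.eigenvectorUnitary.2
  have hstarU : star U * U = 1 := Matrix.mem_unitaryGroup_iff'.mp hM.eigenvectorUnitary.2
  have hspec : M = U * diagonal lam * star U := by
    have := hM.spectral_theorem
    simpa using this
  set V : Matrix (Fin d) (Fin d) ℝ := star U * W * U with hV
  have hVpsd : V.PosSemidef := by
    have := hW.conjTranspose_mul_mul_same U
    rw [hV, Matrix.star_eq_conjTranspose]; exact this
  have hVnonneg : ∀ i, 0 ≤ V i i := by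
    intro i
    have h := hVpsd.2 (Finsupp.single i 1)
    simpa [Matrix.mulVec_single, dotProduct, Pi.single_apply, ite_mul,
      Finset.sum_ite_eq] using h
  have hMT : Mᵀ = M := by
    have := hM.eq
    simpa using this
  -- eigenvalue bound
  have hlam1 : ∀ i, lam i ≤ 1 := by
    intro i
    have hnorm1 : ‖hM.eigenvectorBasis i‖ = 1 := hM.eigenvectorBasis.orthonormal.1 i
    have h0 := M.l2_opNorm_mulVec (hM.eigenvectorBasis i)
    have hrw : (EuclideanSpace.equiv (Fin d) ℝ).symm (M *ᵥ hM.eigenvectorBasis i)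
        = lam i • hM.eigenvectorBasis i :=
      congrArg (EuclideanSpace.equiv (Fin d) ℝ).symm (hM.mulVec_eigenvectorBasis i)
    rw [hrw] at h0
    rw [norm_smul, hnorm1] at h0
    have h := h0
    simp only [mul_one, Real.norm_eq_abs] at h
    calc lam i ≤ |lam i| := le_abs_self _
      _ ≤ ‖M‖ := h
      _ ≤ 1 := hMnorm
  -- projector as U * diagonal e * star U
  set e : Fin d → ℝ := fun i => if ε ≤ lam i then 1 else 0 with he
  have hProj : eigProj hM ε = U * diagonal e * star U := by
    ext a b
    simp only [eigProj, Matrix.sum_apply, vecMulVec_apply, Matrix.mul_apply,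
      Matrix.diagonal_apply, Matrix.star_apply, star_trivial, mul_ite, mul_zero,
      Finset.sum_ite_eq', Finset.mem_univ, if_true]
    rw [Finset.sum_filter]
    refine Finset.sum_congr rfl fun i _ => ?_
    have hUa : U a i = hM.eigenvectorBasis i a := rfl
    have hUb : U b i = hM.eigenvectorBasis i b := rfl
    rw [hUa, hUb]
    simp only [he, ← hlam]
    by_cases hcase : ε ≤ lam i <;> simp [hcase, mul_comm]
  -- trace identities
  have htrD : ∀ (f : Fin d → ℝ), Matrix.trace (diagonal f * V) = ∑ i, f i * V i i := by
    intro f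
    simp [Matrix.trace, Matrix.mul_apply, Matrix.diag, Matrix.diagonal_apply, ite_mul,
      Finset.sum_ite_eq, mul_comm]
  have htrW : Matrix.trace W = ∑ i, V i i := by
    have h1 : Matrix.trace V = Matrix.trace W := by
      rw [hV, Matrix.trace_mul_cycle, hUstar, one_mul]
    rw [← h1, Matrix.trace]
    rfl
  have htrMW : Matrix.trace (Mᵀ * W) = ∑ i, lam i * V i i := by
    rw [hMT]
    have h1 : M * W = U * (diagonal lam * (star U * W)) := by
      rw [hspec]; simp only [Matrix.mul_assoc]
    rw [h1, Matrix.trace_mul_comm U]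
    have h2 : diagonal lam * (star U * W) * U = diagonal lam * V := by
      rw [hV]; simp only [Matrix.mul_assoc]
    rw [h2, htrD]
  -- projector trace
  have hee : diagonal e * diagonal e = diagonal e := by
    rw [Matrix.diagonal_mul_diagonal]
    have hfun : (fun i => e i * e i) = e := by
      funext i
      by_cases hcase : ε ≤ lam i <;> simp [he, hcase]
    rw [hfun]
  have hPidem : (U * diagonal e * star U) * (U * diagonal e * star U)
      = U * diagonal e * star U := by
    have h1 : star U * (U * (diagonal e * star U)) = diagonal e * star U := by
      rw [← Matrix.mul_assoc, hstarU, one_mul]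
    have h2 : diagonal e * (diagonal e * star U) = diagonal e * star U := by
      rw [← Matrix.mul_assoc, hee]
    simp only [Matrix.mul_assoc]
    rw [h1, h2]
  have htrP : Matrix.trace (eigProj hM ε * W * eigProj hM ε) = ∑ i, e i * V i i := by
    rw [hProj, Matrix.trace_mul_cycle (U * diagonal e * star U) W (U * diagonal e * star U),
      hPidem]
    have h1 : U * diagonal e * star U * W = U * (diagonal e * (star U * W)) := by
      simp only [Matrix.mul_assoc]
    rw [h1, Matrix.trace_mul_comm U]
    have h2 : diagonal e * (star U * W) * U = diagonal e * V := by
      rw [hV]; simp only [Matrix.mul_assoc]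
    rw [h2, htrD]
  -- final inequality
  rw [htrMW, htrW, htrP]
  have key : ∀ i, lam i * V i i ≤ ε * V i i + e i * V i i := by
    intro i
    by_cases hcase : ε ≤ lam i
    · have h1 : lam i * V i i ≤ 1 * V i i :=
        mul_le_mul_of_nonneg_right (hlam1 i) (hVnonneg i)
      have h2 : e i = 1 := by simp [he, hcase]
      rw [h2]
      nlinarith [hVnonneg i, hε]
    · have h1 : lam i * V i i ≤ ε * V i i :=
        mul_le_mul_of_nonneg_right (le_of_not_ge hcase) (hVnonneg i)
      have h2 : e i = 0 := by simp [he, hcase]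
      rw [h2]
      linarith
  calc ∑ i, lam i * V i i ≤ ∑ i, (ε * V i i + e i * V i i) :=
        Finset.sum_le_sum fun i _ => key i
    _ = ε * ∑ i, V i i + ∑ i, e i * V i i := by
        rw [Finset.sum_add_distrib, Finset.mul_sum]
end

section
/- Let A be an n×n real symmetric matrix with spectral norm ‖A‖ ≤ 1, let τ ≥ 0, and let s be a natural number with rank_{≥τ}(A) ≤ s. Let W be an n×n real positive semidefinite matrix with Tr(W) = 1 and ‖W‖_F² ≤ 1/t for some real t > 0. Then ⟨A, W⟩ ≤ τ + √(s/t). -/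
open Matrix Finset
open scoped Matrix.Norms.L2Operator

/-- `thresholdRank hM t` is the number of eigenvalues of the Hermitian (real symmetric)
matrix `M` (counted with multiplicity) that are at least `t`. -/
noncomputable def thresholdRank {ι : Type*} [Fintype ι] [DecidableEq ι]
    {M : Matrix ι ι ℝ} (hM : M.IsHermitian) (t : ℝ) : ℕ :=
  (Finset.univ.filter fun i => t ≤ hM.eigenvalues i).card

private lemma psd_diag_nonneg {n : ℕ} {B : Matrix (Fin n) (Fin n) ℝ}
    (hB : B.PosSemidef) (i : Fin n) : 0 ≤ B i i := by
  exact hB.diag_nonneg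

theorem stmt10 {n : ℕ} (A : Matrix (Fin n) (Fin n) ℝ) (hA : A.IsHermitian)
    (hAnorm : ‖A‖ ≤ 1)
    (τ : ℝ) (hτ : 0 ≤ τ) (s : ℕ) (hs : thresholdRank hA τ ≤ s)
    (W : Matrix (Fin n) (Fin n) ℝ) (hW : W.PosSemidef)
    (hWtr : Matrix.trace W = 1)
    (t : ℝ) (ht : 0 < t)
    (hWF : Matrix.trace (Wᵀ * W) ≤ 1 / t) :
    Matrix.trace (Aᵀ * W) ≤ τ + Real.sqrt ((s : ℝ) / t) := by
  classical
  set U : Matrix (Fin n) (Fin n) ℝ := (hA.eigenvectorUnitary : Matrix (Fin n) (Fin n) ℝ) with hUdef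
  have hUmem := (hA.eigenvectorUnitary).2
  have hUU : U * star U = 1 := Matrix.mem_unitaryGroup_iff.mp hUmem
  have hUU' : star U * U = 1 := Matrix.mem_unitaryGroup_iff'.mp hUmem
  set B : Matrix (Fin n) (Fin n) ℝ := Uᴴ * W * U with hBdef
  have hBpsd : B.PosSemidef := hW.conjTranspose_mul_mul_same U
  have hstarU : star U = Uᴴ := rfl
  -- trace of B is 1
  have htrB : Matrix.trace B = 1 := by
    rw [hBdef, Matrix.trace_mul_cycle, ← hstarU, hUU, one_mul, hWtr]
  -- A transpose is A
  have hAT : Aᵀ = A := by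
    ext i j
    have := congrFun (congrFun hA.eq i) j
    simpa [Matrix.conjTranspose_apply] using this
  -- spectral theorem
  have hspec : A = U * Matrix.diagonal hA.eigenvalues * Uᴴ := by
    have := hA.spectral_theorem
    simpa [hstarU, Matrix.star_eq_conjTranspose] using this
  -- the key trace formula
  have htrace : Matrix.trace (Aᵀ * W) = ∑ i, hA.eigenvalues i * B i i := by
    rw [hAT]
    calc Matrix.trace (A * W)
        = Matrix.trace (U * Matrix.diagonal hA.eigenvalues * Uᴴ * W) := by rw [← hspec]
      _ = Matrix.trace (Matrix.diagonal hA.eigenvalues * (Uᴴ * W * U)) := by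
          rw [Matrix.trace_mul_cycle (U * Matrix.diagonal hA.eigenvalues) Uᴴ W,
            show W * (U * Matrix.diagonal hA.eigenvalues) * Uᴴ
              = (W * U) * Matrix.diagonal hA.eigenvalues * Uᴴ by
                simp only [Matrix.mul_assoc],
            Matrix.trace_mul_cycle (W * U) (Matrix.diagonal hA.eigenvalues) Uᴴ,
            Matrix.trace_mul_comm]
          simp only [Matrix.mul_assoc]
      _ = ∑ i, hA.eigenvalues i * B i i := by
          rw [← hBdef, Matrix.trace]
          simp [Matrix.diag, Matrix.mul_apply, Matrix.diagonal]
  -- Frobenius bound transfers to B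
  have hBsym : Bᵀ = B := by
    ext i j
    have := congrFun (congrFun hBpsd.1.eq i) j
    simpa [Matrix.conjTranspose_apply] using this
  have hWsym : Wᵀ = W := by
    ext i j
    have := congrFun (congrFun hW.1.eq i) j
    simpa [Matrix.conjTranspose_apply] using this
  have htrBB : Matrix.trace (Bᵀ * B) = Matrix.trace (Wᵀ * W) := by
    rw [hBsym, hWsym, hBdef]
    have : Uᴴ * W * U * (Uᴴ * W * U) = Uᴴ * (W * W) * U := by
      have h1 : U * Uᴴ = 1 := by rw [← hstarU]; exact hUU
      calc Uᴴ * W * U * (Uᴴ * W * U) = Uᴴ * W * (U * Uᴴ) * W * U := by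
            simp only [Matrix.mul_assoc]
        _ = Uᴴ * (W * W) * U := by rw [h1]; simp only [Matrix.mul_one, Matrix.mul_assoc]
    rw [this, Matrix.trace_mul_cycle, ← hstarU, hUU, one_mul]
  -- diag entries
  set w : Fin n → ℝ := fun i => B i i with hwdef
  have hwnn : ∀ i, 0 ≤ w i := fun i => psd_diag_nonneg hBpsd i
  have hwsum : ∑ i, w i = 1 := htrB
  have hwsq : ∑ i, w i ^ 2 ≤ 1 / t := by
    calc ∑ i, w i ^ 2 ≤ ∑ i, ∑ j, (B j i) ^ 2 := by
          apply Finset.sum_le_sum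
          intro i _
          exact Finset.single_le_sum (fun j _ => sq_nonneg (B j i)) (Finset.mem_univ i)
      _ = Matrix.trace (Bᵀ * B) := by
          rw [Matrix.trace]
          simp [Matrix.diag, Matrix.mul_apply, Matrix.transpose_apply, sq]
      _ = Matrix.trace (Wᵀ * W) := htrBB
      _ ≤ 1 / t := hWF
  -- eigenvalue bound
  have hlam : ∀ i, hA.eigenvalues i ≤ 1 := by
    intro i
    haveI : Nontrivial (Matrix (Fin n) (Fin n) ℝ) :=
      ⟨⟨0, fun _ _ => 1, by intro h; simpa using congrFun (congrFun h i) i⟩⟩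
    have h1 := spectrum.norm_le_norm_of_mem (𝕜 := ℝ) (A := Matrix (Fin n) (Fin n) ℝ) (hA.eigenvalues_mem_spectrum_real i)
    calc hA.eigenvalues i ≤ ‖hA.eigenvalues i‖ := le_abs_self _
      _ ≤ ‖A‖ := h1
      _ ≤ 1 := hAnorm
  -- the big-eigenvalue set
  set S : Finset (Fin n) := Finset.univ.filter (fun i => τ ≤ hA.eigenvalues i) with hSdef
  have hScard : (S.card : ℝ) ≤ s := by exact_mod_cast hs
  -- Cauchy-Schwarz bound on the big part
  have hbig : ∑ i ∈ S, w i ≤ Real.sqrt ((s : ℝ) / t) := by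
    rw [Real.le_sqrt (Finset.sum_nonneg fun i _ => hwnn i)
      (div_nonneg (Nat.cast_nonneg s) ht.le)]
    calc (∑ i ∈ S, w i) ^ 2 ≤ (S.card : ℝ) * ∑ i ∈ S, w i ^ 2 :=
          sq_sum_le_card_mul_sum_sq
      _ ≤ (s : ℝ) * (1 / t) := by
          apply mul_le_mul hScard ?_ ?_ (Nat.cast_nonneg s)
          · calc ∑ i ∈ S, w i ^ 2 ≤ ∑ i, w i ^ 2 :=
                Finset.sum_le_sum_of_subset_of_nonneg (Finset.filter_subset _ _)
                  (fun i _ _ => sq_nonneg (w i))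
              _ ≤ 1 / t := hwsq
          · exact Finset.sum_nonneg fun i _ => sq_nonneg (w i)
      _ = (s : ℝ) / t := by ring
  -- small part bound
  have hsmall : ∑ i ∈ Finset.univ.filter (fun i => ¬ τ ≤ hA.eigenvalues i),
      hA.eigenvalues i * w i ≤ τ := by
    calc ∑ i ∈ Finset.univ.filter (fun i => ¬ τ ≤ hA.eigenvalues i), hA.eigenvalues i * w i
        ≤ ∑ i ∈ Finset.univ.filter (fun i => ¬ τ ≤ hA.eigenvalues i), τ * w i := by
          apply Finset.sum_le_sum
          intro i hi
          rw [Finset.mem_filter] at hi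
          exact mul_le_mul_of_nonneg_right (le_of_not_ge hi.2) (hwnn i)
      _ = τ * ∑ i ∈ Finset.univ.filter (fun i => ¬ τ ≤ hA.eigenvalues i), w i := by
          rw [Finset.mul_sum]
      _ ≤ τ * 1 := by
          apply mul_le_mul_of_nonneg_left ?_ hτ
          rw [← hwsum]
          exact Finset.sum_le_sum_of_subset_of_nonneg (Finset.filter_subset _ _)
            (fun i _ _ => hwnn i)
      _ = τ := mul_one τ
  -- big part bound
  have hbig2 : ∑ i ∈ S, hA.eigenvalues i * w i ≤ ∑ i ∈ S, w i := by
    apply Finset.sum_le_sum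
    intro i _
    calc hA.eigenvalues i * w i ≤ 1 * w i :=
          mul_le_mul_of_nonneg_right (hlam i) (hwnn i)
      _ = w i := one_mul _
  -- combine
  rw [htrace]
  have hsplit : ∑ i, hA.eigenvalues i * w i
      = (∑ i ∈ S, hA.eigenvalues i * w i)
        + ∑ i ∈ Finset.univ.filter (fun i => ¬ τ ≤ hA.eigenvalues i),
            hA.eigenvalues i * w i := by
    rw [hSdef]
    exact (Finset.sum_filter_add_sum_filter_not _ _ _).symm
  rw [hsplit]
  have := add_le_add (hbig2.trans hbig) hsmall
  linarith
end

section
/- Let w_1, ..., w_n be nonzero vectors in ℝ^t. Let A be an n×n real matrix with nonnegative entries and let B be an n×n real matrix with |B_{ij}| ≤ A_{ij} for all i, j. Then (Σ_{i,j} B_{ij}·⟨w_i, w_j⟩)² ≤ (Σ_{i,j} A_{ij}·⟨w_i, w_j⟩²/(‖w_i‖·‖w_j‖)) · (Σ_{i,j} A_{ij}·‖w_i‖·‖w_j‖). -/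
open Matrix Finset
open scoped RealInnerProductSpace

theorem stmt11 {n t : ℕ} (w : Fin n → EuclideanSpace ℝ (Fin t))
    (hw : ∀ i, w i ≠ 0)
    (A B : Matrix (Fin n) (Fin n) ℝ)
    (hApos : ∀ i j, 0 ≤ A i j)
    (hAB : ∀ i j, |B i j| ≤ A i j) :
    (∑ i, ∑ j, B i j * ⟪w i, w j⟫) ^ 2 ≤
      (∑ i, ∑ j, A i j * (⟪w i, w j⟫ ^ 2 / (‖w i‖ * ‖w j‖))) *
        (∑ i, ∑ j, A i j * (‖w i‖ * ‖w j‖)) := by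
  have hwn : ∀ i, (0:ℝ) < ‖w i‖ := fun i => norm_pos_iff.mpr (hw i)
  set f : Fin n × Fin n → ℝ := fun p =>
    Real.sqrt (A p.1 p.2 * (⟪w p.1, w p.2⟫ ^ 2 / (‖w p.1‖ * ‖w p.2‖)))
  set g : Fin n × Fin n → ℝ := fun p =>
    Real.sqrt (A p.1 p.2 * (‖w p.1‖ * ‖w p.2‖))
  have hfg : ∀ p : Fin n × Fin n, f p * g p = A p.1 p.2 * |⟪w p.1, w p.2⟫| := by
    intro p
    have hA := hApos p.1 p.2
    rw [show f p * g p = Real.sqrt ((A p.1 p.2 * (⟪w p.1, w p.2⟫ ^ 2 / (‖w p.1‖ * ‖w p.2‖))) *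
        (A p.1 p.2 * (‖w p.1‖ * ‖w p.2‖))) from (Real.sqrt_mul (by positivity) _).symm]
    have h1 : (A p.1 p.2 * (⟪w p.1, w p.2⟫ ^ 2 / (‖w p.1‖ * ‖w p.2‖))) *
        (A p.1 p.2 * (‖w p.1‖ * ‖w p.2‖)) = (A p.1 p.2 * |⟪w p.1, w p.2⟫|) ^ 2 := by
      have := (hwn p.1).ne'
      have := (hwn p.2).ne'
      field_simp
      ring_nf
      rw [sq_abs]
    rw [h1, Real.sqrt_sq (mul_nonneg (hApos _ _) (abs_nonneg _))]
  have key : (∑ p : Fin n × Fin n, f p * g p) ^ 2 ≤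
      (∑ p : Fin n × Fin n, f p ^ 2) * (∑ p : Fin n × Fin n, g p ^ 2) :=
    Finset.sum_mul_sq_le_sq_mul_sq _ _ _
  have h2 : (∑ i, ∑ j, B i j * ⟪w i, w j⟫) ^ 2 ≤ (∑ p : Fin n × Fin n, f p * g p) ^ 2 := by
    rw [← sq_abs (∑ i, ∑ j, B i j * ⟪w i, w j⟫)]
    apply pow_le_pow_left₀ (abs_nonneg _)
    calc |∑ i, ∑ j, B i j * ⟪w i, w j⟫| ≤ ∑ i, ∑ j, |B i j * ⟪w i, w j⟫| := by
          refine (Finset.abs_sum_le_sum_abs _ _).trans ?_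
          exact Finset.sum_le_sum fun i _ => Finset.abs_sum_le_sum_abs _ _
      _ ≤ ∑ i, ∑ j, A i j * |⟪w i, w j⟫| := by
          refine Finset.sum_le_sum fun i _ => Finset.sum_le_sum fun j _ => ?_
          rw [abs_mul]
          exact mul_le_mul_of_nonneg_right (hAB i j) (abs_nonneg _)
      _ = ∑ p : Fin n × Fin n, f p * g p := by
          rw [← Finset.sum_product']
          exact Finset.sum_congr rfl fun p _ => (hfg p).symm
  refine h2.trans (key.trans_eq ?_)
  congr 1
  · rw [← Finset.sum_product']
    exact Finset.sum_congr rfl fun p _ => Real.sq_sqrt (mul_nonneg (hApos _ _) (by positivity))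
  · rw [← Finset.sum_product']
    exact Finset.sum_congr rfl fun p _ => Real.sq_sqrt (mul_nonneg (hApos _ _) (by positivity))
end

section
/- Let A be an n×n real symmetric matrix with spectral norm ‖A‖ ≤ 1 and A_{ii} = 0 for all i. Let ε > 0 and let Π be the orthogonal projection onto the span of the eigenvectors of A with eigenvalue at least ε. Let m ∈ ℝ^n and let S be a real symmetric n×n matrix with S − mmᵀ positive semidefinite and S_{ii} = 1 for all i. Suppose there exists v ∈ ℝ^n with Tr(Π S Π) − 2·⟨v, Πm⟩ + ‖v‖² ≤ εn. Then ⟨A, S⟩ − mᵀ A m ≤ 5εn. -/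
open Matrix Finset
open scoped Matrix.Norms.L2Operator

section AuxLemmas

variable {ι : Type*} [Fintype ι]

lemma trace_mul_vecMulVec' (X : Matrix ι ι ℝ) (a b : ι → ℝ) :
    Matrix.trace (X * vecMulVec a b) = b ⬝ᵥ (X *ᵥ a) := by
  simp only [Matrix.trace, Matrix.diag, Matrix.mul_apply, vecMulVec_apply, dotProduct,
    Matrix.mulVec, Finset.mul_sum]
  exact Finset.sum_congr rfl fun c _ => Finset.sum_congr rfl fun d _ => by ring

lemma vecMulVec_mul_vecMulVec' (a b c d : ι → ℝ) :
    vecMulVec a b * vecMulVec c d = (b ⬝ᵥ c) • vecMulVec a d := by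
  ext i j
  simp only [Matrix.mul_apply, vecMulVec_apply, Matrix.smul_apply, dotProduct, smul_eq_mul,
    Finset.sum_mul]
  exact Finset.sum_congr rfl fun k _ => by ring

lemma mul_vecMulVec' (X : Matrix ι ι ℝ) (a b : ι → ℝ) :
    X * vecMulVec a b = vecMulVec (X *ᵥ a) b := by
  ext i j
  simp only [Matrix.mul_apply, vecMulVec_apply, Matrix.mulVec, dotProduct, Finset.sum_mul]
  exact Finset.sum_congr rfl fun k _ => by ring

omit [Fintype ι] in
lemma vecMulVec_smul_left' (r : ℝ) (a b : ι → ℝ) :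
    vecMulVec (r • a) b = r • vecMulVec a b := by
  ext i j; simp [vecMulVec_apply, mul_assoc]

omit [Fintype ι] in
lemma transpose_vecMulVec' (a b : ι → ℝ) : (vecMulVec a b)ᵀ = vecMulVec b a := by
  ext i j; simp [vecMulVec_apply, mul_comm]

end AuxLemmas

theorem stmt15 {n : ℕ} (A : Matrix (Fin n) (Fin n) ℝ) (hA : A.IsHermitian)
    (hAnorm : ‖A‖ ≤ 1) (hAdiag : ∀ i, A i i = 0)
    (ε : ℝ) (hε : 0 < ε)
    (m : Fin n → ℝ) (S : Matrix (Fin n) (Fin n) ℝ) (hS : S.IsHermitian)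
    (hPSD : (S - vecMulVec m m).PosSemidef)
    (hSdiag : ∀ i, S i i = 1)
    (hfeas : ∃ v : Fin n → ℝ,
      Matrix.trace (eigProj hA ε * S * eigProj hA ε)
          - 2 * (v ⬝ᵥ (eigProj hA ε *ᵥ m)) + v ⬝ᵥ v ≤ ε * n) :
    Matrix.trace (Aᵀ * S) - m ⬝ᵥ (A *ᵥ m) ≤ 5 * ε * n := by
  classical
  set u : Fin n → Fin n → ℝ := fun i a => hA.eigenvectorBasis i a with hu
  set X : Matrix (Fin n) (Fin n) ℝ := S - vecMulVec m m with hX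
  set q : Fin n → ℝ := fun i => u i ⬝ᵥ (X *ᵥ u i) with hqdef
  set t : Finset (Fin n) := Finset.univ.filter (fun i => ε ≤ hA.eigenvalues i) with ht
  -- orthonormality
  have horm : ∀ i j, u i ⬝ᵥ u j = if i = j then (1:ℝ) else 0 := by
    intro i j
    have := orthonormal_iff_ite.mp hA.eigenvectorBasis.orthonormal i j
    simpa [PiLp.inner_apply, RCLike.inner_apply, conj_trivial, dotProduct, hu, mul_comm] using this
  -- completeness
  have hsum1 : ∑ i, vecMulVec (u i) (u i) = (1 : Matrix (Fin n) (Fin n) ℝ) := by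
    have hV : (hA.eigenvectorUnitary : Matrix (Fin n) (Fin n) ℝ) *
        star (hA.eigenvectorUnitary : Matrix (Fin n) (Fin n) ℝ) = 1 :=
      (Unitary.mem_iff.mp hA.eigenvectorUnitary.2).2
    rw [← hV]
    ext j k
    simp [Matrix.sum_apply, vecMulVec_apply, Matrix.mul_apply, conjTranspose_apply,
      IsHermitian.eigenvectorUnitary_apply, hu, mul_comm]
  -- eigenvalue bound
  have heig : ∀ i, |hA.eigenvalues i| ≤ 1 := by
    intro i
    have h1 : ‖hA.eigenvectorBasis i‖ = 1 := hA.eigenvectorBasis.orthonormal.1 i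
    have h2 := Matrix.l2_opNorm_mulVec A ((hA.eigenvectorBasis i : EuclideanSpace ℝ (Fin n)))
    have h2' : ‖(EuclideanSpace.equiv (Fin n) ℝ).symm (A *ᵥ ⇑(hA.eigenvectorBasis i))‖
        ≤ ‖A‖ * ‖hA.eigenvectorBasis i‖ := h2
    rw [hA.mulVec_eigenvectorBasis i] at h2'
    have h3 : ‖(EuclideanSpace.equiv (Fin n) ℝ).symm (hA.eigenvalues i • ⇑(hA.eigenvectorBasis i))‖
        = |hA.eigenvalues i| := by
      have : (EuclideanSpace.equiv (Fin n) ℝ).symm (hA.eigenvalues i • ⇑(hA.eigenvectorBasis i))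
          = hA.eigenvalues i • (hA.eigenvectorBasis i) := rfl
      rw [this, norm_smul, h1, Real.norm_eq_abs, mul_one]
    rw [h3, h1, mul_one] at h2'
    exact h2'.trans hAnorm
  -- eigenvector equation
  have heigv : ∀ i, A *ᵥ u i = hA.eigenvalues i • u i := fun i => hA.mulVec_eigenvectorBasis i
  -- spectral decomposition
  have hspec : A = ∑ i, hA.eigenvalues i • vecMulVec (u i) (u i) := by
    calc A = A * 1 := by rw [mul_one]
    _ = ∑ i, A * vecMulVec (u i) (u i) := by rw [← hsum1, Finset.mul_sum]
    _ = ∑ i, hA.eigenvalues i • vecMulVec (u i) (u i) := by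
        refine Finset.sum_congr rfl fun i _ => ?_
        rw [mul_vecMulVec', heigv i, vecMulVec_smul_left']
  have hP : eigProj hA ε = ∑ i ∈ t, vecMulVec (u i) (u i) := rfl
  -- q is nonnegative
  have hq0 : ∀ i, 0 ≤ q i := by
    intro i
    have := hPSD.dotProduct_mulVec_nonneg (u i)
    simpa [hqdef] using this
  -- trace of X against a rank-one projector sum
  have htrX : ∀ s : Finset (Fin n),
      Matrix.trace (X * ∑ i ∈ s, vecMulVec (u i) (u i)) = ∑ i ∈ s, q i := by
    intro s
    rw [Finset.mul_sum, Matrix.trace_sum]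
    exact Finset.sum_congr rfl fun i _ => trace_mul_vecMulVec' X (u i) (u i)
  -- total trace
  have htrS : Matrix.trace S = (n : ℝ) := by
    simp [Matrix.trace, Matrix.diag, hSdiag]
  have hsumq : ∑ i, q i = (n : ℝ) - m ⬝ᵥ m := by
    have h1 := htrX Finset.univ
    rw [hsum1, mul_one] at h1
    have h2 : Matrix.trace (vecMulVec m m) = m ⬝ᵥ m := by
      simp [Matrix.trace, Matrix.diag, vecMulVec_apply, dotProduct]
    rw [← h1, hX, Matrix.trace_sub, htrS, h2]
  have hmm0 : (0:ℝ) ≤ m ⬝ᵥ m := Finset.sum_nonneg fun i _ => mul_self_nonneg _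
  have hsumq_le : ∑ i, q i ≤ (n : ℝ) := by rw [hsumq]; linarith
  -- projector identities
  have hPP : eigProj hA ε * eigProj hA ε = eigProj hA ε := by
    rw [hP, Finset.sum_mul_sum]
    refine Finset.sum_congr rfl fun i hi => ?_
    rw [Finset.sum_eq_single i]
    · rw [vecMulVec_mul_vecMulVec', horm, if_pos rfl, one_smul]
    · intro j _ hj
      rw [vecMulVec_mul_vecMulVec', horm, if_neg (fun h => hj h.symm), zero_smul]
    · intro h; exact absurd hi h
  have hPt : (eigProj hA ε)ᵀ = eigProj hA ε := by
    rw [hP, Matrix.transpose_sum]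
    exact Finset.sum_congr rfl fun i _ => transpose_vecMulVec' (u i) (u i)
  -- the constraint bound
  obtain ⟨v, hv⟩ := hfeas
  set w : Fin n → ℝ := eigProj hA ε *ᵥ m with hw
  have hww : w ⬝ᵥ w = m ⬝ᵥ w := by
    have h1 : w ᵥ* eigProj hA ε = w := by
      rw [← Matrix.mulVec_transpose, hPt, hw, Matrix.mulVec_mulVec, hPP]
    calc w ⬝ᵥ w = w ⬝ᵥ (eigProj hA ε *ᵥ m) := by rw [hw]
    _ = (w ᵥ* eigProj hA ε) ⬝ᵥ m := by rw [Matrix.dotProduct_mulVec]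
    _ = w ⬝ᵥ m := by rw [h1]
    _ = m ⬝ᵥ w := dotProduct_comm _ _
  have htrPSP : Matrix.trace (eigProj hA ε * S * eigProj hA ε)
      = Matrix.trace (S * eigProj hA ε) := by
    calc Matrix.trace (eigProj hA ε * S * eigProj hA ε)
        = Matrix.trace (eigProj hA ε * (eigProj hA ε * S)) := by rw [Matrix.trace_mul_comm]
    _ = Matrix.trace (eigProj hA ε * eigProj hA ε * S) := by rw [Matrix.mul_assoc]
    _ = Matrix.trace (eigProj hA ε * S) := by rw [hPP]
    _ = Matrix.trace (S * eigProj hA ε) := Matrix.trace_mul_comm _ _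
  have htrXP : Matrix.trace (X * eigProj hA ε) = ∑ i ∈ t, q i := by
    rw [hP]; exact htrX t
  have htrXP' : Matrix.trace (X * eigProj hA ε)
      = Matrix.trace (eigProj hA ε * S * eigProj hA ε) - m ⬝ᵥ w := by
    rw [htrPSP, hX, Matrix.sub_mul, Matrix.trace_sub]
    congr 1
    rw [Matrix.trace_mul_comm, trace_mul_vecMulVec', hw]
  have hsq : (0:ℝ) ≤ (v - w) ⬝ᵥ (v - w) :=
    Finset.sum_nonneg fun i _ => mul_self_nonneg _
  have hexp : (v - w) ⬝ᵥ (v - w) = v ⬝ᵥ v - 2 * (v ⬝ᵥ w) + w ⬝ᵥ w := by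
    simp only [sub_dotProduct, dotProduct_sub]
    rw [dotProduct_comm w v]; ring
  have hK3 : ∑ i ∈ t, q i ≤ ε * n := by
    have := hv
    have h1 : ∑ i ∈ t, q i = Matrix.trace (eigProj hA ε * S * eigProj hA ε) - m ⬝ᵥ w := by
      rw [← htrXP, htrXP']
    rw [h1]
    have := hexp ▸ hsq
    linarith [hww]
  -- main identity
  have hAT : Aᵀ = A := by
    ext i j
    have := congrFun (congrFun hA.eq i) j
    simpa using this
  have key : Matrix.trace (Aᵀ * S) - m ⬝ᵥ (A *ᵥ m) = ∑ i, hA.eigenvalues i * q i := by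
    rw [hAT]
    have h1 : m ⬝ᵥ (A *ᵥ m) = Matrix.trace (A * vecMulVec m m) :=
      (trace_mul_vecMulVec' A m m).symm
    rw [h1, ← Matrix.trace_sub, ← Matrix.mul_sub, ← hX, Matrix.trace_mul_comm]
    conv_lhs => rw [hspec]
    rw [Finset.mul_sum, Matrix.trace_sum]
    refine Finset.sum_congr rfl fun i _ => ?_
    rw [Matrix.mul_smul, Matrix.trace_smul, trace_mul_vecMulVec', smul_eq_mul, hqdef]
  rw [key]
  have hsplit : ∑ i, hA.eigenvalues i * q i
      = ∑ i ∈ t, hA.eigenvalues i * q i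
        + ∑ i ∈ Finset.univ.filter (fun i => ¬ ε ≤ hA.eigenvalues i), hA.eigenvalues i * q i := by
    rw [ht]
    exact (Finset.sum_filter_add_sum_filter_not _ _ _).symm
  have hb1 : ∑ i ∈ t, hA.eigenvalues i * q i ≤ ∑ i ∈ t, q i := by
    refine Finset.sum_le_sum fun i _ => ?_
    have h1 : hA.eigenvalues i ≤ 1 := (le_abs_self _).trans (heig i)
    nlinarith [hq0 i]
  have hb2 : ∑ i ∈ Finset.univ.filter (fun i => ¬ ε ≤ hA.eigenvalues i), hA.eigenvalues i * q i
      ≤ ε * n := by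
    calc ∑ i ∈ Finset.univ.filter (fun i => ¬ ε ≤ hA.eigenvalues i), hA.eigenvalues i * q i
        ≤ ∑ i ∈ Finset.univ.filter (fun i => ¬ ε ≤ hA.eigenvalues i), ε * q i := by
          refine Finset.sum_le_sum fun i hi => ?_
          have h1 : hA.eigenvalues i ≤ ε := le_of_lt (lt_of_not_ge (Finset.mem_filter.mp hi).2)
          nlinarith [hq0 i]
    _ = ε * ∑ i ∈ Finset.univ.filter (fun i => ¬ ε ≤ hA.eigenvalues i), q i := by
          rw [Finset.mul_sum]
    _ ≤ ε * ∑ i, q i := by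
          refine mul_le_mul_of_nonneg_left ?_ hε.le
          exact Finset.sum_le_sum_of_subset_of_nonneg (Finset.filter_subset _ _)
            (fun i _ _ => hq0 i)
    _ ≤ ε * n := mul_le_mul_of_nonneg_left hsumq_le hε.le
  have hεn : (0:ℝ) ≤ ε * n := mul_nonneg hε.le (Nat.cast_nonneg n)
  linarith
end
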